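/- arXiv:math/0109174 — 2 statements merged into one kernel-verified Lean document; each statement's English description precedes it below -/
import Mathlib

section
/- Let S > 0 and σ > 0. Let θ : (0,S] → [0,∞) be integrable with σ·∫₀^S θ(τ) dτ ≤ log 2, let h : (0,S] → ℝ satisfy |h(s) − 2/s| ≤ θ(s) for all s ∈ (0,S], let F : (0,S] → ℝ be integrable, and let y : (0,S] → ℝ be differentiable with y′(s) + σ·h(s)·y(s) = F(s) on (0,S] and s^{2σ}·y(s) → 0 as s → 0⁺. Then |y(s)| ≤ 4·∫₀^s |F(τ)| dτ for all s ∈ (0,S]. -/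
/-!
For `w = s ^ (2σ) * y` the equation becomes `w' = s ^ (2σ) F - σ (h - 2 / s) w`, whose
coefficient is bounded by `σ θ`. On `[r, s]` let `M` be the maximum of `|w|`, attained at `t₀`;
integrating from `r` to `t₀` gives `M ≤ |w r| + s ^ (2σ) ∫₀ˢ |F| + (σ ∫ θ) M`, and `σ ∫ θ ≤ log 2 < 1`
absorbs the last term. Letting `r → 0` and using `1 / (1 - log 2) < 4` gives the bound.
-/

open MeasureTheory Set

theorem integral_mono_interval_of_nonneg {f : ℝ → ℝ} {a b c d : ℝ} (hca : c ≤ a) (hab : a ≤ b)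
    (hbd : b ≤ d) (hf : IntegrableOn f (Ioc c d)) (hf0 : ∀ x ∈ Ioc c d, 0 ≤ f x) :
    ∫ x in a..b, f x ≤ ∫ x in c..d, f x :=
  intervalIntegral.integral_mono_interval hca hab hbd
    (ae_restrict_of_forall_mem measurableSet_Ioc hf0)
    ((intervalIntegrable_iff_integrableOn_Ioc_of_le (hca.trans (hab.trans hbd))).2 hf)

theorem abs_sub_le_integral_of_abs_deriv_le {f f' φ : ℝ → ℝ} {a b : ℝ} (hab : a ≤ b)
    (hf : ContinuousOn f (Icc a b)) (hderiv : ∀ x ∈ Ioo a b, HasDerivAt f (f' x) x)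
    (hφ : IntegrableOn φ (Icc a b)) (hbound : ∀ x ∈ Ioo a b, |f' x| ≤ φ x) :
    |f b - f a| ≤ ∫ x in a..b, φ x := by
  refine abs_le.2 ⟨?_, ?_⟩
  · have := intervalIntegral.sub_le_integral_of_hasDeriv_right_of_le hab hf.neg
      (fun x hx => (hderiv x hx).neg.hasDerivWithinAt) hφ
      (fun x hx => (neg_le_abs _).trans (hbound x hx))
    simp only [Pi.neg_apply] at this
    linarith
  · exact intervalIntegral.sub_le_integral_of_hasDeriv_right_of_le hab hf
      (fun x hx => (hderiv x hx).hasDerivWithinAt) hφ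
      (fun x hx => (le_abs_self _).trans (hbound x hx))

theorem abs_le_of_abs_deriv_le_add_mul_abs {w w' A κ : ℝ → ℝ} {r s c : ℝ} (hrs : r ≤ s)
    (hw : ContinuousOn w (Icc r s)) (hderiv : ∀ t ∈ Ioo r s, HasDerivAt w (w' t) t)
    (hA : IntegrableOn A (Icc r s)) (hA0 : ∀ t ∈ Icc r s, 0 ≤ A t)
    (hκ : IntegrableOn κ (Icc r s)) (hκ0 : ∀ t ∈ Icc r s, 0 ≤ κ t)
    (hκc : ∫ t in r..s, κ t ≤ c) (hc : c < 1)
    (hbound : ∀ t ∈ Ioo r s, |w' t| ≤ A t + κ t * |w t|) :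
    |w s| ≤ (|w r| + ∫ t in r..s, A t) / (1 - c) := by
  obtain ⟨t₀, ht₀, hmax⟩ := isCompact_Icc.exists_isMaxOn (nonempty_Icc.2 hrs) hw.abs
  set M := |w t₀|
  have hsub : Icc r t₀ ⊆ Icc r s := Icc_subset_Icc_right ht₀.2
  have hmono {g : ℝ → ℝ} (hg : IntegrableOn g (Icc r s)) (hg0 : ∀ t ∈ Icc r s, 0 ≤ g t) :
      ∫ t in r..t₀, g t ≤ ∫ t in r..s, g t :=
    integral_mono_interval_of_nonneg le_rfl ht₀.1 ht₀.2 (hg.mono_set Ioc_subset_Icc_self)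
      fun t ht => hg0 t (Ioc_subset_Icc_self ht)
  have hA_int : IntervalIntegrable A volume r t₀ :=
    (intervalIntegrable_iff_integrableOn_Icc_of_le ht₀.1).2 (hA.mono_set hsub)
  have hκM_int : IntervalIntegrable (fun t => κ t * M) volume r t₀ :=
    (intervalIntegrable_iff_integrableOn_Icc_of_le ht₀.1).2 ((hκ.mono_set hsub).mul_const M)
  have hdiff : |w t₀ - w r| ≤ ∫ t in r..t₀, (A t + κ t * M) :=
    abs_sub_le_integral_of_abs_deriv_le ht₀.1 (hw.mono hsub)
      (fun t ht => hderiv t ⟨ht.1, ht.2.trans_le ht₀.2⟩)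
      ((hA.mono_set hsub).add ((hκ.mono_set hsub).mul_const M)) fun t ht => by
        have ht' : t ∈ Icc r s := ⟨ht.1.le, ht.2.le.trans ht₀.2⟩
        have := mul_le_mul_of_nonneg_left (show |w t| ≤ M from hmax ht') (hκ0 t ht')
        linarith [hbound t ⟨ht.1, ht.2.trans_le ht₀.2⟩]
  have hκ_le : (∫ t in r..t₀, κ t) * M ≤ c * M :=
    mul_le_mul_of_nonneg_right ((hmono hκ hκ0).trans hκc) (abs_nonneg _)
  have hM : M ≤ |w r| + (∫ t in r..s, A t) + c * M := by
    rw [intervalIntegral.integral_add hA_int hκM_int, intervalIntegral.integral_mul_const] at hdiff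
    linarith [abs_sub_abs_le_abs_sub (w t₀) (w r), hmono hA hA0, hκ_le]
  have hs : |w s| ≤ M := hmax (right_mem_Icc.2 hrs)
  rw [le_div_iff₀ (sub_pos.2 hc)]
  nlinarith [mul_le_mul_of_nonneg_right hs (sub_pos.2 hc).le]

theorem hasDerivAt_rpow_mul {y : ℝ → ℝ} {y' t : ℝ} (p : ℝ) (ht : 0 < t) (hy : HasDerivAt y y' t) :
    HasDerivAt (fun u => u ^ p * y u) (t ^ p * (y' + p / t * y t)) t := by
  refine ((Real.hasDerivAt_rpow_const (p := p) (Or.inl ht.ne')).mul hy).congr_deriv ?_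
  rw [Real.rpow_sub ht, Real.rpow_one]
  ring

theorem abs_rpow_mul_le_of_transport {S σ : ℝ} {θ h F y : ℝ → ℝ} (hσ : 0 ≤ σ)
    (hθ_int : IntegrableOn θ (Ioc 0 S)) (hθ_small : σ * ∫ τ in (0:ℝ)..S, θ τ ≤ Real.log 2)
    (hh : ∀ s ∈ Ioc (0:ℝ) S, |h s - 2 / s| ≤ θ s) (hF_int : IntegrableOn F (Ioc 0 S))
    (hy : ∀ s ∈ Ioc (0:ℝ) S, HasDerivAt y (F s - σ * h s * y s) s)
    {r s : ℝ} (hr : 0 < r) (hrs : r ≤ s) (hsS : s ≤ S) :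
    |s ^ (2 * σ) * y s| ≤
      (|r ^ (2 * σ) * y r| + s ^ (2 * σ) * ∫ τ in (0:ℝ)..s, |F τ|) / (1 - Real.log 2) := by
  have hsub : Icc r s ⊆ Ioc 0 S := fun t ht => ⟨hr.trans_le ht.1, ht.2.trans hsS⟩
  have hpow : 0 ≤ s ^ (2 * σ) := Real.rpow_nonneg (hr.le.trans hrs) _
  have hθ0 : ∀ t ∈ Ioc (0:ℝ) S, 0 ≤ θ t := fun t ht => (abs_nonneg _).trans (hh t ht)
  have hw : ∀ t ∈ Icc r s, HasDerivAt (fun u => u ^ (2 * σ) * y u)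
      (t ^ (2 * σ) * F t - σ * (h t - 2 / t) * (t ^ (2 * σ) * y t)) t := fun t ht =>
    (hasDerivAt_rpow_mul (2 * σ) (hsub ht).1 (hy t (hsub ht))).congr_deriv (by ring)
  have hκc : ∫ t in r..s, σ * θ t ≤ Real.log 2 := by
    rw [intervalIntegral.integral_const_mul]
    exact (mul_le_mul_of_nonneg_left
      (integral_mono_interval_of_nonneg hr.le hrs hsS hθ_int hθ0) hσ).trans hθ_small
  have hF : ∫ t in r..s, s ^ (2 * σ) * |F t| ≤ s ^ (2 * σ) * ∫ τ in (0:ℝ)..s, |F τ| := by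
    rw [intervalIntegral.integral_const_mul]
    exact mul_le_mul_of_nonneg_left (integral_mono_interval_of_nonneg hr.le hrs le_rfl
      (hF_int.mono_set (Ioc_subset_Ioc_right hsS)).abs fun _ _ => abs_nonneg _) hpow
  refine (abs_le_of_abs_deriv_le_add_mul_abs (A := fun t => s ^ (2 * σ) * |F t|)
    (κ := fun t => σ * θ t) hrs (fun t ht => (hw t ht).continuousAt.continuousWithinAt)
    (fun t ht => hw t (Ioo_subset_Icc_self ht))
    ((hF_int.mono_set hsub).abs.const_mul _) (fun _ _ => mul_nonneg hpow (abs_nonneg _))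
    ((hθ_int.mono_set hsub).const_mul σ) (fun t ht => mul_nonneg hσ (hθ0 t (hsub ht)))
    hκc (by linarith [Real.log_two_lt_d9]) fun t ht => ?_).trans ?_
  · have ht' : t ∈ Ioc (0:ℝ) S := hsub (Ioo_subset_Icc_self ht)
    have hts : t ^ (2 * σ) ≤ s ^ (2 * σ) :=
      Real.rpow_le_rpow ht'.1.le ht.2.le (by positivity)
    calc |t ^ (2 * σ) * F t - σ * (h t - 2 / t) * (t ^ (2 * σ) * y t)|
        ≤ t ^ (2 * σ) * |F t| + σ * |h t - 2 / t| * |t ^ (2 * σ) * y t| := by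
          refine (abs_sub _ _).trans_eq ?_
          rw [abs_mul (σ * _), abs_mul σ, abs_mul (t ^ _), abs_of_nonneg hσ,
            abs_of_nonneg (Real.rpow_nonneg ht'.1.le _)]
      _ ≤ s ^ (2 * σ) * |F t| + σ * θ t * |t ^ (2 * σ) * y t| := by
          gcongr
          exact hh t ht'
  · gcongr
    linarith [Real.log_two_lt_d9]

theorem stmt_5_general (S sg : ℝ) (hsg : 0 < sg)
    (θ h F y : ℝ → ℝ)
    (hθ_int : IntegrableOn θ (Ioc 0 S))
    (hθ_small : sg * (∫ τ in (0:ℝ)..S, θ τ) ≤ Real.log 2)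
    (hh : ∀ s ∈ Ioc (0:ℝ) S, |h s - 2 / s| ≤ θ s)
    (hF_int : IntegrableOn F (Ioc 0 S))
    (hy : ∀ s ∈ Ioc (0:ℝ) S, HasDerivAt y (F s - sg * h s * y s) s)
    (hy0 : Filter.Tendsto (fun s => s ^ (2 * sg) * y s)
      (nhdsWithin 0 (Ioi 0)) (nhds 0)) :
    ∀ s ∈ Ioc (0:ℝ) S, |y s| ≤ 4 * ∫ τ in (0:ℝ)..s, |F τ| := by
  intro s hs
  set I := ∫ τ in (0:ℝ)..s, |F τ|
  have hpow : 0 < s ^ (2 * sg) := Real.rpow_pos_of_pos hs.1 _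
  have hlog : 1 / 4 < 1 - Real.log 2 := by linarith [Real.log_two_lt_d9]
  have hweighted : s ^ (2 * sg) * |y s| ≤ (0 + s ^ (2 * sg) * I) / (1 - Real.log 2) := by
    rw [← abs_of_pos hpow, ← abs_mul, abs_of_pos hpow]
    have hlim := hy0.abs
    rw [abs_zero] at hlim
    refine ge_of_tendsto ((hlim.add_const _).div_const _) ?_
    filter_upwards [Ioo_mem_nhdsGT hs.1] with r hr
    exact abs_rpow_mul_le_of_transport hsg.le hθ_int hθ_small hh hF_int hy hr.1 hr.2.le hs.2
  have hI : 0 ≤ I := intervalIntegral.integral_nonneg hs.1.le fun _ _ => abs_nonneg _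
  rw [zero_add, mul_div_assoc, mul_le_mul_iff_right₀ hpow] at hweighted
  exact hweighted.trans (by rw [div_le_iff₀ (by linarith)]; nlinarith)

/-- Scalar form of the Transport Lemma (6.2): if `y' + σ·h·y = F` on `(0,S]`,
where `h` is close to `2/s` (`|h - 2/s| ≤ θ` with `σ∫₀^S θ ≤ log 2`), and
`s^{2σ}·y → 0` as `s → 0⁺`, then `|y s| ≤ 4∫₀^s |F|`. -/
theorem stmt_5 (S sg : ℝ) (hS : 0 < S) (hsg : 0 < sg)
    (θ h F y : ℝ → ℝ)
    (hθ_nonneg : ∀ s ∈ Ioc (0:ℝ) S, 0 ≤ θ s)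
    (hθ_int : IntegrableOn θ (Ioc 0 S))
    (hθ_small : sg * (∫ τ in (0:ℝ)..S, θ τ) ≤ Real.log 2)
    (hh : ∀ s ∈ Ioc (0:ℝ) S, |h s - 2 / s| ≤ θ s)
    (hF_int : IntegrableOn F (Ioc 0 S))
    (hy : ∀ s ∈ Ioc (0:ℝ) S, HasDerivAt y (F s - sg * h s * y s) s)
    (hy0 : Filter.Tendsto (fun s => s ^ (2 * sg) * y s)
      (nhdsWithin 0 (Ioi 0)) (nhds 0)) :
    ∀ s ∈ Ioc (0:ℝ) S, |y s| ≤ 4 * ∫ τ in (0:ℝ)..s, |F τ| :=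
  stmt_5_general S sg hsg θ h F y hθ_int hθ_small hh hF_int hy hy0
end

section
/- Let S > 0 and Λ ≥ 0. Let θ : (0,S] → [0,∞) be integrable with ∫₀^S θ(τ) dτ ≤ Λ, let h : (0,S] → ℝ satisfy h(s) ≥ 2/s − θ(s) for all s ∈ (0,S], let F : (0,S] → ℝ be continuous with σ ↦ σ²·|F(σ)| integrable on (0,S], and let y : (0,S] → ℝ be differentiable with y′(s) + h(s)·y(s) = F(s) on (0,S] and s²·y(s) → 0 as s → 0⁺. Then |y(s)| ≤ e^Λ · s^{−2} · ∫₀^s σ²·|F(σ)| dσ for all s ∈ (0,S]. -/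
/-!
With `w = s² y` the equation reads `w' = s² F - (h - 2/s) w`, and `-(h - 2/s) ≤ θ`, so `u = |w|`
has right derivative at most `s² |F| + θ u`. Grönwall on `[ε, s]` gives
`u s ≤ exp (∫ θ) (u ε + ∫ σ² |F|)`, and `ε → 0⁺` removes `u ε` because `s² y → 0`.
Since `θ` is only integrable, Grönwall is run with a lower semicontinuous majorant `g > θ` with
`∫ g ≤ Λ + δ` (Vitali–Carathéodory): the primitive of `g` has right lower Dini derivative
`≥ θ` at every point, which is all the comparison argument needs. Finally `δ → 0⁺`.
-/

open MeasureTheory Set Filter Topology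
open scoped ENNReal

theorem eventually_slope_exp_neg_mul_lt {u Θ : ℝ → ℝ} {x c L r : ℝ} (hu : 0 ≤ u x)
    (hL : Tendsto (slope u x) (𝓝[>] x) (𝓝 L))
    (hΘ : ∀ r < c, ∀ᶠ z in 𝓝[>] x, r * (z - x) ≤ Θ z - Θ x)
    (hΘ0 : ∀ᶠ z in 𝓝[>] x, 0 ≤ Θ z) (hr0 : 0 < r) (hr : L - c * u x < r) :
    ∀ᶠ z in 𝓝[>] x, slope (fun t => Real.exp (-Θ t) * u t) x z < r := by
  set η := (r - (L - c * u x)) / (2 * (1 + u x)) with hη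
  have hη0 : 0 < η := div_pos (by linarith) (by linarith)
  set β := L + η - (c - η) * u x
  have hβr : β < r := by
    have : η * (1 + u x) = (r - (L - c * u x)) / 2 := by rw [hη]; field_simp
    linarith
  filter_upwards [hL.eventually_lt_const (lt_add_of_pos_right L hη0), hΘ (c - η) (by linarith),
    hΘ0, self_mem_nhdsWithin] with z hslope hinc hΘz hz
  have hzx : 0 < z - x := sub_pos.2 hz
  set e := Real.exp (-Θ z)
  have he : 0 < e := Real.exp_pos _
  have he1 : e ≤ 1 := Real.exp_le_one_iff.2 (by linarith)
  have hexp : e * (Θ z - Θ x + 1) ≤ Real.exp (-Θ x) :=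
    calc e * (Θ z - Θ x + 1) ≤ e * Real.exp (Θ z - Θ x) :=
          mul_le_mul_of_nonneg_left (Real.add_one_le_exp _) he.le
      _ = Real.exp (-Θ x) := by rw [← Real.exp_add]; ring_nf
  have hsplit : slope (fun t => Real.exp (-Θ t) * u t) x z
      = e * slope u x z + u x * ((e - Real.exp (-Θ x)) / (z - x)) := by
    rw [slope_def_field, slope_def_field]; field_simp; ring
  have hdiff : (e - Real.exp (-Θ x)) / (z - x) ≤ -(c - η) * e := by
    rw [div_le_iff₀ hzx]; nlinarith
  calc slope (fun t => Real.exp (-Θ t) * u t) x z ≤ e * β := by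
        rw [hsplit]
        nlinarith [mul_le_mul_of_nonneg_left hslope.le he.le, mul_le_mul_of_nonneg_left hdiff hu]
    _ ≤ max β 0 := by
        rcases le_total β 0 with hβ | hβ
        · exact (mul_nonpos_of_nonneg_of_nonpos he.le hβ).trans (le_max_right _ _)
        · exact (mul_le_of_le_one_left hβ he1).trans (le_max_left _ _)
    _ < r := max_lt hβr hr0

/-- `hΘ'` says that the lower right Dini derivative of `Θ` is at least `θ`. -/
theorem le_exp_mul_add_integral_of_slope_le {u φ θ Θ : ℝ → ℝ} {a b : ℝ} (hab : a ≤ b)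
    (hu : ContinuousOn u (Icc a b)) (hu0 : ∀ x ∈ Ico a b, 0 ≤ u x)
    (hu' : ∀ x ∈ Ico a b, ∃ L ≤ φ x + θ x * u x, Tendsto (slope u x) (𝓝[>] x) (𝓝 L))
    (hφ : ContinuousOn φ (Icc a b)) (hφ0 : ∀ x ∈ Ico a b, 0 ≤ φ x)
    (hΘ : ContinuousOn Θ (Icc a b)) (hΘa : Θ a = 0) (hΘ0 : ∀ x ∈ Icc a b, 0 ≤ Θ x)
    (hΘ' : ∀ x ∈ Ico a b, ∀ r < θ x, ∀ᶠ z in 𝓝[>] x, r * (z - x) ≤ Θ z - Θ x) :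
    u b ≤ Real.exp (Θ b) * (u a + ∫ x in a..b, φ x) := by
  have hB : ContinuousOn (fun t => u a + ∫ τ in a..t, φ τ) (Icc a b) := by
    have := intervalIntegral.continuousOn_primitive_interval (μ := volume)
      (uIcc_of_le hab ▸ hφ.integrableOn_Icc)
    exact continuousOn_const.add (uIcc_of_le hab ▸ this)
  have hB' (x) (hx : x ∈ Ico a b) :
      HasDerivWithinAt (fun t => u a + ∫ τ in a..t, φ τ) (φ x) (Ici x) x := by
    have : Fact (x ∈ Icc a b) := ⟨Ico_subset_Icc_self hx⟩
    refine ((intervalIntegral.integral_hasDerivWithinAt_right (s := Icc a b)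
      ((hφ.mono (Icc_subset_Icc_right hx.2.le)).intervalIntegrable_of_Icc hx.1)
      (hφ.stronglyMeasurableAtFilter_nhdsWithin measurableSet_Icc x)
      (hφ x (Ico_subset_Icc_self hx))).const_add (u a)).mono_of_mem_nhdsWithin ?_
    exact Icc_mem_nhdsGE_of_mem hx
  have key := image_le_of_liminf_slope_right_le_deriv_boundary
    (f := fun t => Real.exp (-Θ t) * u t) ((Real.continuous_exp.comp_continuousOn hΘ.neg).mul hu)
    (by simp [hΘa]) hB hB' ?_ (right_mem_Icc.2 hab)
  · calc u b = Real.exp (Θ b) * (Real.exp (-Θ b) * u b) := by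
          rw [← mul_assoc, ← Real.exp_add]; simp
      _ ≤ _ := mul_le_mul_of_nonneg_left key (Real.exp_pos _).le
  · intro x hx r hr
    obtain ⟨L, hL, hlim⟩ := hu' x hx
    have hΘ0x : ∀ᶠ z in 𝓝[>] x, 0 ≤ Θ z := by
      filter_upwards [Ioc_mem_nhdsGT hx.2] with z hz using hΘ0 z ⟨hx.1.trans hz.1.le, hz.2⟩
    exact (eventually_slope_exp_neg_mul_lt (hu0 x hx) hlim (hΘ' x hx) hΘ0x
      ((hφ0 x hx).trans_lt hr) (by linarith)).frequently

theorem eventually_mul_sub_le_integral_toReal {g : ℝ → ℝ≥0∞} (hg : LowerSemicontinuous g)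
    (hfin : ∀ᵐ t, g t < ∞) (hint : Integrable fun t => (g t).toReal) {x c : ℝ}
    (hc : ENNReal.ofReal c ≤ g x) (r : ℝ) (hr : r < c) :
    ∀ᶠ z in 𝓝[>] x, r * (z - x) ≤ ∫ t in x..z, (g t).toReal := by
  rcases le_or_gt r 0 with hr0 | hr0
  · filter_upwards [self_mem_nhdsWithin] with z hz
    exact (mul_nonpos_of_nonpos_of_nonneg hr0 (sub_nonneg.2 (le_of_lt hz))).trans
      (intervalIntegral.integral_nonneg (le_of_lt hz) fun _ _ => ENNReal.toReal_nonneg)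
  have hrg : ENNReal.ofReal r < g x :=
    ((ENNReal.ofReal_lt_ofReal_iff (hr0.trans hr)).2 hr).trans_le hc
  obtain ⟨d, hxd, hd⟩ := mem_nhdsGT_iff_exists_Ioo_subset.1 (nhdsWithin_le_nhds (hg x _ hrg))
  filter_upwards [Ioo_mem_nhdsGT hxd] with z hz
  have hlow : (fun _ => r) ≤ᵐ[volume.restrict (Icc x z)] fun t => (g t).toReal := by
    filter_upwards [ae_restrict_of_ae hfin, ae_restrict_mem measurableSet_Icc] with t hfin ht
    refine (ENNReal.ofReal_le_iff_le_toReal hfin.ne).1 (le_of_lt ?_)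
    rcases ht.1.eq_or_lt with rfl | hxt
    · exact hrg
    · exact hd ⟨hxt, ht.2.trans_lt hz.2⟩
  calc r * (z - x) = ∫ _ in x..z, r := by simp [mul_comm]
    _ ≤ ∫ t in x..z, (g t).toReal :=
      intervalIntegral.integral_mono_ae_restrict (le_of_lt hz.1) intervalIntegrable_const
        hint.intervalIntegrable hlow

theorem le_exp_integral_mul_add_integral {u φ θ : ℝ → ℝ} {g : ℝ → ℝ≥0∞} {a b : ℝ} (hab : a ≤ b)
    (hu : ContinuousOn u (Icc a b)) (hu0 : ∀ x ∈ Ico a b, 0 ≤ u x)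
    (hu' : ∀ x ∈ Ico a b, ∃ L ≤ φ x + θ x * u x, Tendsto (slope u x) (𝓝[>] x) (𝓝 L))
    (hφ : ContinuousOn φ (Icc a b)) (hφ0 : ∀ x ∈ Ico a b, 0 ≤ φ x)
    (hg : LowerSemicontinuous g) (hfin : ∀ᵐ t, g t < ∞) (hint : Integrable fun t => (g t).toReal)
    (hθg : ∀ x ∈ Ico a b, ENNReal.ofReal (θ x) ≤ g x) :
    u b ≤ Real.exp (∫ t in a..b, (g t).toReal) * (u a + ∫ x in a..b, φ x) := by
  refine le_exp_mul_add_integral_of_slope_le hab hu hu0 hu' hφ hφ0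
    (intervalIntegral.continuous_primitive (fun _ _ => hint.intervalIntegrable) a).continuousOn
    intervalIntegral.integral_same
    (fun x hx => intervalIntegral.integral_nonneg hx.1 fun _ _ => ENNReal.toReal_nonneg)
    fun x hx r hr => ?_
  filter_upwards [eventually_mul_sub_le_integral_toReal hg hfin hint (hθg x hx) r hr] with z hz
  rwa [intervalIntegral.integral_interval_sub_left hint.intervalIntegrable
    hint.intervalIntegrable]

theorem exists_lowerSemicontinuous_ofReal_lt_integral_lt {α : Type*} [TopologicalSpace α]
    [MeasurableSpace α] [BorelSpace α] {μ : Measure α} [μ.WeaklyRegular] [SigmaFinite μ]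
    {f : α → ℝ} (hf : Integrable f μ) (hf0 : 0 ≤ᵐ[μ] f) {ε : ℝ} (hε : 0 < ε) :
    ∃ g : α → ℝ≥0∞, (∀ x, ENNReal.ofReal (f x) < g x) ∧ LowerSemicontinuous g ∧
      (∀ᵐ x ∂μ, g x < ∞) ∧ Integrable (fun x => (g x).toReal) μ ∧
      ∫ x, (g x).toReal ∂μ < ∫ x, f x ∂μ + ε := by
  obtain ⟨g, hfg, hg, hfin, hint, hgf⟩ :=
    exists_lt_lowerSemicontinuous_integral_gt_nnreal (fun x => (f x).toNNReal) hf.real_toNNReal hε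
  refine ⟨g, hfg, hg, hfin, hint, hgf.trans_eq ?_⟩
  congr 1
  exact integral_congr_ae (hf0.mono fun x hx => Real.coe_toNNReal _ hx)

theorem exists_tendsto_slope_abs_le {w : ℝ → ℝ} {x a p : ℝ} (hw : HasDerivAt w (a - p * w x) x) :
    ∃ L ≤ |a| - p * |w x|, Tendsto (slope (fun t => |w t|) x) (𝓝[>] x) (𝓝 L) := by
  have hslope (v : ℝ → ℝ) (v' : ℝ) (hv : HasDerivAt v v' x) :
      Tendsto (slope v x) (𝓝[>] x) (𝓝 v') :=
    (hasDerivWithinAt_iff_tendsto_slope' (lt_irrefl x)).1 hv.hasDerivWithinAt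
  rcases lt_trichotomy (w x) 0 with hneg | hzero | hpos
  · refine ⟨-(a - p * w x), ?_, hslope _ _ ((hasDerivAt_abs_neg hneg).comp x hw |>.congr_deriv ?_)⟩
    · rw [abs_of_neg hneg]; linarith [neg_le_abs a]
    · ring
  · refine ⟨|a|, by simp [hzero], ?_⟩
    have := (hslope w _ hw).abs
    rw [hzero, mul_zero, sub_zero] at this
    refine this.congr' ?_
    filter_upwards [self_mem_nhdsWithin] with z hz
    rw [slope_def_field, slope_def_field, abs_div, abs_of_pos (sub_pos.2 hz : 0 < z - x), hzero,
      abs_zero, sub_zero, sub_zero]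
  · refine ⟨a - p * w x, ?_, hslope _ _ ((hasDerivAt_abs_pos hpos).comp x hw |>.congr_deriv ?_)⟩
    · rw [abs_of_pos hpos]; linarith [le_abs_self a]
    · ring

theorem sq_mul_abs_le_exp_integral_mul {ε s : ℝ} {θ h F y : ℝ → ℝ} {g : ℝ → ℝ≥0∞}
    (hε : 0 < ε) (hεs : ε ≤ s)
    (hh : ∀ x ∈ Icc ε s, 2 / x - θ x ≤ h x) (hF : ContinuousOn F (Icc ε s))
    (hy : ∀ x ∈ Icc ε s, HasDerivAt y (F x - h x * y x) x)
    (hg : LowerSemicontinuous g) (hfin : ∀ᵐ t, g t < ∞) (hint : Integrable fun t => (g t).toReal)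
    (hθg : ∀ x ∈ Icc ε s, ENNReal.ofReal (θ x) ≤ g x) :
    s ^ 2 * |y s| ≤ Real.exp (∫ t in ε..s, (g t).toReal) *
      (ε ^ 2 * |y ε| + ∫ σ in ε..s, σ ^ 2 * |F σ|) := by
  have habs (x : ℝ) : |x ^ 2 * y x| = x ^ 2 * |y x| := by rw [abs_mul, abs_sq]
  have hw (x) (hx : x ∈ Icc ε s) :
      HasDerivAt (fun t => t ^ 2 * y t) (x ^ 2 * F x - (h x - 2 / x) * (x ^ 2 * y x)) x := by
    have hx0 : x ≠ 0 := (hε.trans_le hx.1).ne'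
    refine ((hasDerivAt_pow 2 x).mul (hy x hx)).congr_deriv ?_
    field_simp
    ring
  simp only [← habs]
  refine le_exp_integral_mul_add_integral hεs
    (fun x hx => (hw x hx).continuousAt.continuousWithinAt.abs) (fun _ _ => abs_nonneg _)
    (fun x hx => ?_) ((continuousOn_id.pow 2).mul hF.abs) (fun _ _ => by positivity)
    hg hfin hint (fun x hx => hθg x (Ico_subset_Icc_self hx))
  obtain ⟨L, hL, hlim⟩ := exists_tendsto_slope_abs_le (hw x (Ico_subset_Icc_self hx))
  refine ⟨L, hL.trans ?_, hlim⟩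
  rw [abs_mul, abs_sq]
  have := hh x (Ico_subset_Icc_self hx)
  nlinarith [abs_nonneg (x ^ 2 * y x)]

theorem sq_mul_abs_le_exp_mul_integral {s K : ℝ} {θ h F y : ℝ → ℝ} {g : ℝ → ℝ≥0∞} (hs : 0 < s)
    (hh : ∀ x ∈ Ioc 0 s, 2 / x - θ x ≤ h x) (hF : ContinuousOn F (Ioc 0 s))
    (hF_int : IntegrableOn (fun σ => σ ^ 2 * |F σ|) (Ioc 0 s))
    (hy : ∀ x ∈ Ioc 0 s, HasDerivAt y (F x - h x * y x) x)
    (hy0 : Tendsto (fun x => x ^ 2 * y x) (𝓝[>] 0) (𝓝 0))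
    (hg : LowerSemicontinuous g) (hfin : ∀ᵐ t, g t < ∞) (hint : Integrable fun t => (g t).toReal)
    (hgK : ∫ t, (g t).toReal ≤ K) (hθg : ∀ x ∈ Ioc 0 s, ENNReal.ofReal (θ x) ≤ g x) :
    s ^ 2 * |y s| ≤ Real.exp K * ∫ σ in (0:ℝ)..s, σ ^ 2 * |F σ| := by
  set I := ∫ σ in (0:ℝ)..s, σ ^ 2 * |F σ|
  have hbound (ε) (hε : ε ∈ Ioo 0 s) : s ^ 2 * |y s| ≤ Real.exp K * (ε ^ 2 * |y ε| + I) := by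
    have hsub : Icc ε s ⊆ Ioc 0 s := Icc_subset_Ioc hε.1 le_rfl
    refine (sq_mul_abs_le_exp_integral_mul hε.1 hε.2.le (fun x hx => hh x (hsub hx))
      (hF.mono hsub) (fun x hx => hy x (hsub hx)) hg hfin hint
      (fun x hx => hθg x (hsub hx))).trans ?_
    have hφ_nonneg : 0 ≤ ∫ σ in ε..s, σ ^ 2 * |F σ| :=
      intervalIntegral.integral_nonneg hε.2.le fun _ _ => by positivity
    gcongr
    · rw [intervalIntegral.integral_of_le hε.2.le]
      exact (setIntegral_le_integral hint (ae_of_all _ fun _ => ENNReal.toReal_nonneg)).trans hgK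
    · exact intervalIntegral.integral_mono_interval hε.1.le hε.2.le le_rfl
        (ae_of_all _ fun _ => by positivity)
        ((intervalIntegrable_iff_integrableOn_Ioc_of_le hs.le).2 hF_int)
  have hlim : Tendsto (fun ε => Real.exp K * (ε ^ 2 * |y ε| + I)) (𝓝[>] 0)
      (𝓝 (Real.exp K * I)) := by
    have hu0 : Tendsto (fun ε => ε ^ 2 * |y ε|) (𝓝[>] 0) (𝓝 0) := by
      simpa only [abs_mul, abs_sq, abs_zero] using hy0.abs
    simpa using tendsto_const_nhds.mul (hu0.add_const I)
  refine ge_of_tendsto hlim ?_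
  filter_upwards [Ioo_mem_nhdsGT hs] using hbound

theorem stmt_7_general (S Λ : ℝ)
    (θ h F y : ℝ → ℝ)
    (hθ_nonneg : ∀ s ∈ Ioc (0:ℝ) S, 0 ≤ θ s)
    (hθ_int : IntegrableOn θ (Ioc 0 S))
    (hθ_bound : (∫ τ in (0:ℝ)..S, θ τ) ≤ Λ)
    (hh : ∀ s ∈ Ioc (0:ℝ) S, 2 / s - θ s ≤ h s)
    (hF_cont : ContinuousOn F (Ioc 0 S))
    (hF_int : IntegrableOn (fun σ => σ ^ 2 * |F σ|) (Ioc 0 S))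
    (hy : ∀ s ∈ Ioc (0:ℝ) S, HasDerivAt y (F s - h s * y s) s)
    (hy0 : Filter.Tendsto (fun s => s ^ 2 * y s) (nhdsWithin 0 (Ioi 0)) (nhds 0)) :
    ∀ s ∈ Ioc (0:ℝ) S,
      |y s| ≤ Real.exp Λ * (s ^ 2)⁻¹ * ∫ σ in (0:ℝ)..s, σ ^ 2 * |F σ| := by
  intro s ⟨hs, hsS⟩
  set I := ∫ σ in (0:ℝ)..s, σ ^ 2 * |F σ|
  have hsub : Ioc 0 s ⊆ Ioc 0 S := Ioc_subset_Ioc_right hsS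
  have hθ_total : ∫ x, (Ioc 0 S).indicator θ x ≤ Λ := by
    rwa [integral_indicator measurableSet_Ioc, ← intervalIntegral.integral_of_le (hs.le.trans hsS)]
  have hδ (δ : ℝ) (hδ : 0 < δ) : s ^ 2 * |y s| ≤ Real.exp (Λ + δ) * I := by
    obtain ⟨g, hθg, hg, hfin, hint, hgθ⟩ := exists_lowerSemicontinuous_ofReal_lt_integral_lt
      (hθ_int.integrable_indicator measurableSet_Ioc)
      (ae_of_all _ (indicator_nonneg hθ_nonneg)) hδ
    refine sq_mul_abs_le_exp_mul_integral hs (fun x hx => hh x (hsub hx)) (hF_cont.mono hsub)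
      (hF_int.mono_set hsub) (fun x hx => hy x (hsub hx)) hy0 hg hfin hint (by linarith)
      fun x hx => ?_
    simpa [indicator_of_mem (hsub hx)] using (hθg x).le
  have hlim : Tendsto (fun δ => Real.exp (Λ + δ) * I) (𝓝[>] 0) (𝓝 (Real.exp Λ * I)) := by
    have hc : Continuous fun δ => Real.exp (Λ + δ) * I := by fun_prop
    simpa using (hc.tendsto 0).mono_left nhdsWithin_le_nhds
  have hsq : s ^ 2 * |y s| ≤ Real.exp Λ * I :=
    ge_of_tendsto hlim (eventually_nhdsWithin_of_forall hδ)
  rw [mul_right_comm, ← div_eq_mul_inv, le_div_iff₀ (by positivity)]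
  linarith

/-- Scalar integrated form of the Raychaudhuri equation estimate (Section 8.1):
if `y' + h·y = F` on `(0,S]` with `h ≥ 2/s - θ`, `∫₀^S θ ≤ Λ`, and `s²·y → 0`
as `s → 0⁺`, then `|y s| ≤ e^Λ · s^{-2} · ∫₀^s σ²|F σ| dσ`. -/
theorem stmt_7 (S Λ : ℝ) (hS : 0 < S) (hΛ : 0 ≤ Λ)
    (θ h F y : ℝ → ℝ)
    (hθ_nonneg : ∀ s ∈ Ioc (0:ℝ) S, 0 ≤ θ s)
    (hθ_int : IntegrableOn θ (Ioc 0 S))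
    (hθ_bound : (∫ τ in (0:ℝ)..S, θ τ) ≤ Λ)
    (hh : ∀ s ∈ Ioc (0:ℝ) S, 2 / s - θ s ≤ h s)
    (hF_cont : ContinuousOn F (Ioc 0 S))
    (hF_int : IntegrableOn (fun σ => σ ^ 2 * |F σ|) (Ioc 0 S))
    (hy : ∀ s ∈ Ioc (0:ℝ) S, HasDerivAt y (F s - h s * y s) s)
    (hy0 : Filter.Tendsto (fun s => s ^ 2 * y s) (nhdsWithin 0 (Ioi 0)) (nhds 0)) :
    ∀ s ∈ Ioc (0:ℝ) S,
      |y s| ≤ Real.exp Λ * (s ^ 2)⁻¹ * ∫ σ in (0:ℝ)..s, σ ^ 2 * |F σ| :=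
  stmt_7_general S Λ θ h F y hθ_nonneg hθ_int hθ_bound hh hF_cont hF_int hy hy0
end
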